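/- If two distributions p and q on a finite alphabet pair (X,Y) satisfy q = p, then the vCLUB estimator E_{p_{XY}}[log q(Y|X)] - E_{p_X ⊗ p_Y}[log q(Y|X)] exceeds the direct estimator E_{p_{XY}}[log q(Y|X) - log q(Y)] = I^p(X;Y) by exactly E_{p_Y}[log p(Y)] - E_{p_X⊗p_Y}[log p(Y|X)] ≥ 0; hence vCLUB ≥ I^p(X;Y) when q = p. -/

import Mathlib

/-!
Since `log (p(x,y) / p(x)) - log p(y) = log (p(x,y) / (p(x) p(y)))`, the direct estimator is the
mutual information. The two estimators share the term `E_{p_{XY}}[log p(Y|X)]`, so their difference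
is `∑_y p(y) (log p(y) - E_{p_X}[log p(y|X)])`; since `E_{p_X}[p(y|X)] = p(y)`, each bracket is
nonnegative by Jensen's inequality for the concave logarithm.
-/

open BigOperators

noncomputable section

variable {α β : Type*} [Fintype α] [Fintype β]

def marginalX (p : α × β → ℝ) : α → ℝ := fun a => ∑ b, p (a, b)

def marginalY (p : α × β → ℝ) : β → ℝ := fun b => ∑ a, p (a, b)

/-- Mutual information I^p(X;Y). -/
def mutualInfo (p : α × β → ℝ) : ℝ :=
  ∑ x : α × β, p x * Real.log (p x / (marginalX p x.1 * marginalY p x.2))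

/-- The direct estimator with q = p: E_{p_{XY}}[log p(Y|X) - log p(Y)]. -/
def directEstimator (p : α × β → ℝ) : ℝ :=
  ∑ x : α × β, p x * (Real.log (p x / marginalX p x.1) - Real.log (marginalY p x.2))

/-- The vCLUB estimator with q = p:
E_{p_{XY}}[log p(Y|X)] - E_{p_X ⊗ p_Y}[log p(Y|X)]. -/
def vCLUB (p : α × β → ℝ) : ℝ :=
  (∑ x : α × β, p x * Real.log (p x / marginalX p x.1)) -
  ∑ x : α × β, marginalX p x.1 * marginalY p x.2 * Real.log (p x / marginalX p x.1)

theorem Real.sum_mul_log_div_le_log_sum {ι : Type*} (s : Finset ι) {w f : ι → ℝ}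
    (hw : ∀ i ∈ s, 0 < w i) (hw_sum : ∑ i ∈ s, w i = 1) (hf : ∀ i ∈ s, 0 < f i) :
    ∑ i ∈ s, w i * Real.log (f i / w i) ≤ Real.log (∑ i ∈ s, f i) := by
  have hmean : ∑ i ∈ s, w i • (f i / w i) = ∑ i ∈ s, f i :=
    Finset.sum_congr rfl fun i hi => by rw [smul_eq_mul, mul_div_cancel₀ _ (hw i hi).ne']
  have := strictConcaveOn_log_Ioi.concaveOn.le_map_sum (fun i hi => (hw i hi).le) hw_sum
    fun i hi => Set.mem_Ioi.mpr (div_pos (hf i hi) (hw i hi))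
  rw [hmean] at this
  simpa only [smul_eq_mul] using this

section

variable {p : α × β → ℝ}

theorem sum_marginalX (p : α × β → ℝ) : ∑ a, marginalX p a = ∑ x, p x :=
  (Fintype.sum_prod_type p).symm

omit [Fintype α] in
theorem marginalX_pos [Nonempty β] (hp : ∀ x, 0 < p x) (a : α) : 0 < marginalX p a :=
  Finset.sum_pos (fun b _ => hp (a, b)) Finset.univ_nonempty

omit [Fintype β] in
theorem marginalY_pos [Nonempty α] (hp : ∀ x, 0 < p x) (b : β) : 0 < marginalY p b :=
  Finset.sum_pos (fun a _ => hp (a, b)) Finset.univ_nonempty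

theorem directEstimator_eq_mutualInfo (hp : ∀ x, 0 < p x) :
    directEstimator p = mutualInfo p := by
  refine Finset.sum_congr rfl fun x _ => ?_
  have : Nonempty α := ⟨x.1⟩
  have : Nonempty β := ⟨x.2⟩
  rw [div_mul_eq_div_div,
    Real.log_div (div_pos (hp x) (marginalX_pos hp x.1)).ne' (marginalY_pos hp x.2).ne']

theorem sum_mul_log_marginalY (p : α × β → ℝ) :
    ∑ x : α × β, p x * Real.log (marginalY p x.2) =
      ∑ b, marginalY p b * Real.log (marginalY p b) := by
  rw [Fintype.sum_prod_type_right]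
  exact Finset.sum_congr rfl fun b _ => (Finset.sum_mul _ _ (Real.log (marginalY p b))).symm

theorem vCLUB_sub_directEstimator (p : α × β → ℝ) :
    vCLUB p - directEstimator p =
      (∑ b, marginalY p b * Real.log (marginalY p b)) -
        ∑ x : α × β, marginalX p x.1 * marginalY p x.2 *
          Real.log (p x / marginalX p x.1) := by
  rw [vCLUB, directEstimator, ← sum_mul_log_marginalY]
  simp only [mul_sub, Finset.sum_sub_distrib]
  ring

theorem vCLUB_sub_directEstimator_nonneg (hp : ∀ x, 0 < p x) (hpsum : ∑ x, p x = 1) :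
    0 ≤ vCLUB p - directEstimator p := by
  obtain ⟨⟨a₀, b₀⟩, -, -⟩ := Finset.exists_ne_zero_of_sum_ne_zero (hpsum ▸ one_ne_zero)
  have : Nonempty α := ⟨a₀⟩
  have : Nonempty β := ⟨b₀⟩
  rw [vCLUB_sub_directEstimator, Fintype.sum_prod_type_right, ← Finset.sum_sub_distrib]
  refine Finset.sum_nonneg fun b _ => sub_nonneg.mpr ?_
  have jensen : ∑ a, marginalX p a * Real.log (p (a, b) / marginalX p a) ≤
      Real.log (marginalY p b) :=
    Real.sum_mul_log_div_le_log_sum _ (fun a _ => marginalX_pos hp a)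
      ((sum_marginalX p).trans hpsum) fun a _ => hp (a, b)
  calc ∑ a, marginalX p a * marginalY p b * Real.log (p (a, b) / marginalX p a)
      = marginalY p b * ∑ a, marginalX p a * Real.log (p (a, b) / marginalX p a) := by
        rw [Finset.mul_sum]
        exact Finset.sum_congr rfl fun a _ => by ring
    _ ≤ marginalY p b * Real.log (marginalY p b) :=
        mul_le_mul_of_nonneg_left jensen (marginalY_pos hp b).le

end

/-- When q = p, the direct estimator equals the true mutual information, the
vCLUB estimator exceeds it by exactly
E_{p_Y}[log p(Y)] - E_{p_X ⊗ p_Y}[log p(Y|X)] ≥ 0, and hence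
vCLUB ≥ I^p(X;Y). -/
theorem vCLUB_exceeds_direct (p : α × β → ℝ) (hp : ∀ x, 0 < p x)
    (hpsum : ∑ x, p x = 1) :
    directEstimator p = mutualInfo p ∧
    vCLUB p - directEstimator p =
      (∑ b, marginalY p b * Real.log (marginalY p b)) -
        ∑ x : α × β, marginalX p x.1 * marginalY p x.2 *
          Real.log (p x / marginalX p x.1) ∧
    0 ≤ vCLUB p - directEstimator p ∧
    mutualInfo p ≤ vCLUB p := by
  have direct_eq := directEstimator_eq_mutualInfo hp
  have gap_nonneg := vCLUB_sub_directEstimator_nonneg hp hpsum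
  exact ⟨direct_eq, vCLUB_sub_directEstimator p, gap_nonneg, by linarith⟩
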